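/- With the operator (𝒰f)(x) = ∫ (f(x) − f(y))/(x − y) β(dy), for every n ≥ 0 and x ∈ (−2,2): (𝒰ψ_n)(x) = (2 − 2·φ_{n+1}(x))/(4 − x²) when n is odd, and (𝒰ψ_n)(x) = (x − 2·φ_{n+1}(x))/(4 − x²) when n is even. -/

import Mathlib

/-!
The divided difference of `U_n` telescopes:
`U_n(a) - U_n(b) = 2 (a - b) ∑_{k<n} U_{n-1-k}(a) U_k(b)`, so
`(𝒰ψ_n)(x) = ∑_{k<n} ψ_{n-1-k}(x) ∫ ψ_k dβ`. Substituting `y = 2 cos θ` turns `β` into `dθ / π`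
on `[0, π]`; since `U_{k+2} - U_k = 2 T_{k+2}` and `T_m(cos θ) = cos (m θ)`, the moment
`∫ ψ_k dβ` is `1` for even `k` and `0` for odd `k`. The remaining sum `∑_{k<n, k even} U_{n-1-k}`
telescopes through `4 (1 - X²) U_m = 2 T_m - 2 T_{m+2}`.
-/

open MeasureTheory Real Polynomial Polynomial.Chebyshev

/-- The arcsine law on `[-2,2]`. -/
noncomputable def arcsineLaw : Measure ℝ :=
  (volume.restrict (Set.Icc (-2 : ℝ) 2)).withDensity
    fun y => ENNReal.ofReal (1 / (π * Real.sqrt (4 - y ^ 2)))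

open Finset

namespace Polynomial.Chebyshev

variable {R : Type*} [CommRing R]

lemma two_mul_sub_mul_U_eval_mul_U_eval (a b : R) (m j : ℤ) :
    2 * (a - b) * ((U R m).eval a * (U R j).eval b) =
      ((U R (m + 1)).eval a * (U R j).eval b - (U R m).eval a * (U R (j - 1)).eval b) -
        ((U R m).eval a * (U R (j + 1)).eval b - (U R (m - 1)).eval a * (U R j).eval b) := by
  simp only [U_add_one, eval_sub, eval_mul, eval_ofNat, eval_X]
  ring

lemma U_eval_sub_U_eval (a b : R) (n : ℕ) :
    (U R n).eval a - (U R n).eval b =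
      2 * (a - b) * ∑ k ∈ range n, (U R (n - 1 - k)).eval a * (U R k).eval b := by
  let G : ℕ → R := fun k =>
    (U R (n - k)).eval a * (U R k).eval b - (U R (n - 1 - k)).eval a * (U R (k - 1)).eval b
  have hG : ∀ k ∈ range n, 2 * (a - b) * ((U R (n - 1 - k)).eval a * (U R k).eval b) =
      G k - G (k + 1) := by
    intro k _
    rw [two_mul_sub_mul_U_eval_mul_U_eval]
    simp only [G]
    push_cast
    ring_nf
  rw [mul_sum, sum_congr rfl hG, sum_range_sub']
  simp [G, U_neg_one]

lemma four_mul_one_sub_X_sq_mul_U (m : ℤ) :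
    4 * (1 - X ^ 2) * U R m = 2 * T R m - 2 * T R (m + 2) := by
  rw [T_eq_X_mul_U_sub_U, T_eq_U_sub_X_mul_U, U_add_one]
  ring

lemma four_mul_one_sub_X_sq_mul_sum_U (n : ℕ) :
    4 * (1 - X ^ 2) * ∑ k ∈ range n, (if Even k then U R (n - 1 - k) else 0) =
      (if Odd n then 2 else 2 * X) - 2 * T R (n + 1) := by
  induction n using Nat.twoStepInduction with
  | zero => simp
  | one => simp [T_two]; ring
  | more n ih _ =>
    have hshift : ∀ k ∈ range n,
        (if Even (k + 1 + 1) then U R ((n + 2 : ℕ) - 1 - (k + 1 + 1 : ℕ)) else 0) =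
          if Even k then U R (n - 1 - k) else 0 := by
      intro k _
      simp only [Nat.even_add_one, not_not]
      push_cast; ring_nf
    have hodd : Odd (n + 2) ↔ Odd n := by simp [Nat.odd_add_one]
    rw [sum_range_succ', sum_range_succ', sum_congr rfl hshift]
    simp only [Nat.even_add_one, Even.zero, not_true_eq_false, if_true, if_false, add_zero, hodd]
    rw [mul_add, ih, show ((n + 2 : ℕ) : ℤ) - 1 - (0 : ℕ) = n + 1 by push_cast; ring,
      four_mul_one_sub_X_sq_mul_U]
    push_cast
    ring_nf

end Polynomial.Chebyshev

lemma image_two_mul_cos_Icc : (fun θ => 2 * cos θ) '' Set.Icc 0 π = Set.Icc (-2) 2 := by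
  rw [← Set.image_image (2 * ·) cos, bijOn_cos.image_eq, Set.image_mul_left_Icc (by norm_num)
    (by norm_num)]
  norm_num

lemma sqrt_four_sub_two_mul_cos_sq {θ : ℝ} (hθ : θ ∈ Set.Icc 0 π) :
    √(4 - (2 * cos θ) ^ 2) = 2 * sin θ := by
  rw [← sqrt_sq (by linarith [sin_nonneg_of_nonneg_of_le_pi hθ.1 hθ.2] : 0 ≤ 2 * sin θ)]
  congr 1
  linear_combination (-4) * sin_sq_add_cos_sq θ

lemma integral_arcsineLaw (f : ℝ → ℝ) :
    ∫ y, f y ∂arcsineLaw = π⁻¹ * ∫ θ in 0..π, f (2 * cos θ) := by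
  rw [arcsineLaw, integral_withDensity_eq_integral_toReal_smul (by fun_prop)
    (ae_of_all _ fun _ => ENNReal.ofReal_lt_top), ← image_two_mul_cos_Icc,
    integral_image_eq_integral_abs_deriv_smul measurableSet_Icc
      (fun θ _ => ((hasDerivAt_cos θ).const_mul 2).hasDerivWithinAt)
      ((mul_right_injective₀ two_ne_zero).comp_injOn injOn_cos),
    intervalIntegral.integral_of_le pi_pos.le, ← integral_const_mul,
    integral_Icc_eq_integral_Ioo, integral_Ioc_eq_integral_Ioo]
  refine setIntegral_congr_fun measurableSet_Ioo fun θ hθ => ?_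
  have hsin : 0 < sin θ := sin_pos_of_pos_of_lt_pi hθ.1 hθ.2
  rw [sqrt_four_sub_two_mul_cos_sq (Set.Ioo_subset_Icc_self hθ),
    ENNReal.toReal_ofReal (by positivity), abs_of_nonpos (by linarith), smul_eq_mul, smul_eq_mul]
  field_simp

lemma integral_cos_nat_mul {m : ℕ} (hm : m ≠ 0) : ∫ θ in 0..π, cos (m * θ) = 0 := by
  rw [intervalIntegral.integral_comp_mul_left cos (Nat.cast_ne_zero.2 hm), integral_cos]
  simp [sin_nat_mul_pi]

lemma integral_U_eval_cos (k : ℕ) :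
    ∫ θ in 0..π, (U ℝ k).eval (cos θ) = if Even k then π else 0 := by
  induction k using Nat.twoStepInduction with
  | zero => simp
  | one => simp [integral_cos]
  | more k ih _ =>
    have hU : ∀ θ, (U ℝ (k + 2 : ℕ)).eval (cos θ) =
        2 * cos ((k + 2 : ℕ) * θ) + (U ℝ k).eval (cos θ) := fun θ => by
      have := T_real_cos θ (k + 2)
      push_cast at this ⊢
      rw [U_eq_two_mul_T_add_U, eval_add, eval_mul, this]
      simp
    simp only [hU]
    rw [intervalIntegral.integral_add (Continuous.intervalIntegrable (by fun_prop) _ _)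
      (Continuous.intervalIntegrable (by fun_prop) _ _), intervalIntegral.integral_const_mul,
      integral_cos_nat_mul (by omega), ih]
    simp [Nat.even_add_one]

instance nullSingletonClass_arcsineLaw : NullSingletonClass arcsineLaw := by
  unfold arcsineLaw
  infer_instance

lemma integral_arcsineLaw_U_diff_quotient (n : ℕ) (x : ℝ) :
    ∫ y, ((U ℝ n).eval (x / 2) - (U ℝ n).eval (y / 2)) / (x - y) ∂arcsineLaw =
      ∑ k ∈ range n, if Even k then (U ℝ (n - 1 - k)).eval (x / 2) else 0 := by
  have hae : (fun y => ((U ℝ n).eval (x / 2) - (U ℝ n).eval (y / 2)) / (x - y)) =ᵐ[arcsineLaw]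
      fun y => ∑ k ∈ range n, (U ℝ (n - 1 - k)).eval (x / 2) * (U ℝ k).eval (y / 2) := by
    filter_upwards [arcsineLaw.ae_ne x] with y hy
    rw [U_eval_sub_U_eval, div_eq_iff (sub_ne_zero.2 hy.symm)]
    ring
  rw [integral_congr_ae hae, integral_arcsineLaw]
  simp only [mul_div_cancel_left₀ _ (two_ne_zero' ℝ)]
  rw [intervalIntegral.integral_finsetSum fun k _ =>
    Continuous.intervalIntegrable (by fun_prop) _ _]
  simp only [intervalIntegral.integral_const_mul, integral_U_eval_cos, mul_ite, mul_zero, mul_sum]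
  refine sum_congr rfl fun k _ => ?_
  split_ifs
  · field_simp
  · rfl

/-- The operator `𝒰` applied to `ψ_n(x) = U_n(x/2)`: for `x ∈ (-2,2)`,
`(𝒰ψ_n)(x) = (2 - 2 φ_{n+1}(x))/(4 - x²)` if `n` is odd and
`(𝒰ψ_n)(x) = (x - 2 φ_{n+1}(x))/(4 - x²)` if `n` is even. -/
theorem calU_chebyshev_U (n : ℕ) (x : ℝ) (hx : x ∈ Set.Ioo (-2 : ℝ) 2) :
    ∫ y, ((U ℝ n).eval (x / 2) - (U ℝ n).eval (y / 2)) / (x - y) ∂arcsineLaw =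
      if Odd n then (2 - 2 * (T ℝ ((n : ℤ) + 1)).eval (x / 2)) / (4 - x ^ 2)
      else (x - 2 * (T ℝ ((n : ℤ) + 1)).eval (x / 2)) / (4 - x ^ 2) := by
  have hx2 : 4 - x ^ 2 ≠ 0 := by nlinarith [hx.1, hx.2]
  have hsum := congrArg (eval (x / 2)) (four_mul_one_sub_X_sq_mul_sum_U (R := ℝ) n)
  simp only [eval_mul, eval_sub, eval_pow, eval_X, eval_one, eval_ofNat, eval_finsetSum,
    apply_ite (eval (x / 2)), eval_zero] at hsum
  rw [integral_arcsineLaw_U_diff_quotient, ← ite_div, eq_div_iff hx2]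
  split_ifs at hsum ⊢ <;> linear_combination hsum
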